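/- Assume ᾱ_ν(q,v,t) = α_ν(q,v,t) for every ν = 1,…,k and every (q,v,t) ∈ ℝⁿ × ℝᵐ × ℝ. Then: (i) ∑_{i=1}^n û_i(q,v,t)·(∂L/∂u_i)(q,û(q,v,t),t) = ∑_{r=1}^m v_r (∂L*/∂v_r)(q,v,t) for all (q,v,t), hence E = E*; (ii) along every C² curve satisfying the constraints and solving the Voronec equations, d/dt[E*(q(t),v(t),t)] = −(∂L/∂t)(q(t), û(q(t),v(t),t), t); (iii) if moreover ∂L/∂t ≡ 0, then E* is constant along every such curve. -/

import Mathlib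

/-!
For a function `f (q, v, t)` put `energy f = ∑ r, v_r ∂f/∂v_r - f`, so that `E* = energy L*` and
`ᾱ_ν - α_ν = energy α_ν`. Along any C² curve the `v̇`-terms cancel in `d/dt energy f`, leaving
`∑ r, v_r d/dt (∂f/∂v_r) - ∑ i, q̇_i ∂f/∂q_i - ∂f/∂t`.

Homogeneity makes `energy α_ν` vanish identically; on a constrained curve this reads
`∑ r, v_r B_rν = ∂α_ν/∂t`. For `f = L*`, the Voronec equations, the constraints and homogeneity
reduce the derivative of `E*` to `∑ ν, ∂α_ν/∂t ∂L/∂u_{m+ν} - ∂L*/∂t`, which is `-∂L/∂t` by the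
chain rule. Part (i) is the chain rule for `∂L*/∂v_r` combined with homogeneity.
-/

open scoped BigOperators
noncomputable section
namespace NH

/-- The phase point `(q, v, t)` with `q : ℝⁿ` (n = m+k) and independent velocities `v : ℝᵐ`. -/
abbrev Pt (m k : ℕ) : Type := (Fin (m+k) → ℝ) × (Fin m → ℝ) × ℝ

/-- The full phase point `(q, u, t)` with all velocities `u : ℝⁿ`. -/
abbrev PtL (m k : ℕ) : Type := (Fin (m+k) → ℝ) × (Fin (m+k) → ℝ) × ℝ

/-- Partial derivative of `f (q, w, t)` with respect to `q_i`. -/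
def pq {n m' : ℕ} (f : (Fin n → ℝ) × (Fin m' → ℝ) × ℝ → ℝ) (i : Fin n)
    (x : (Fin n → ℝ) × (Fin m' → ℝ) × ℝ) : ℝ :=
  fderiv ℝ f x (Pi.single i 1, 0, 0)

/-- Partial derivative of `f (q, w, t)` with respect to the velocity variable `w_j`. -/
def pv {n m' : ℕ} (f : (Fin n → ℝ) × (Fin m' → ℝ) × ℝ → ℝ) (j : Fin m')
    (x : (Fin n → ℝ) × (Fin m' → ℝ) × ℝ) : ℝ :=
  fderiv ℝ f x (0, Pi.single j 1, 0)

/-- Partial derivative of `f (q, w, t)` with respect to time `t`. -/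
def pt {n m' : ℕ} (f : (Fin n → ℝ) × (Fin m' → ℝ) × ℝ → ℝ)
    (x : (Fin n → ℝ) × (Fin m' → ℝ) × ℝ) : ℝ :=
  fderiv ℝ f x (0, 0, 1)

/-- Partial derivative of `U (q, t)` with respect to `q_i`. -/
def pUq {n : ℕ} (U : (Fin n → ℝ) × ℝ → ℝ) (i : Fin n) (x : (Fin n → ℝ) × ℝ) : ℝ :=
  fderiv ℝ U x (Pi.single i 1, 0)

/-- Partial derivative of `U (q, t)` with respect to `t`. -/
def pUt {n : ℕ} (U : (Fin n → ℝ) × ℝ → ℝ) (x : (Fin n → ℝ) × ℝ) : ℝ :=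
  fderiv ℝ U x (0, 1)

variable {m k : ℕ}

/-- `û(q,v,t) = (v₁,…,vₘ, α₁(q,v,t),…,α_k(q,v,t))`. -/
def uhat (α : Fin k → Pt m k → ℝ) (x : Pt m k) : Fin (m+k) → ℝ :=
  Fin.append x.2.1 (fun ν => α ν x)

/-- The full phase point `(q, û(q,v,t), t)` associated to `(q,v,t)`. -/
def Lpt (α : Fin k → Pt m k → ℝ) (x : Pt m k) : PtL m k :=
  (x.1, uhat α x, x.2.2)

/-- The restricted Lagrangian `L*(q,v,t) = L(q, û(q,v,t), t)`. -/
def Lstar (L : PtL m k → ℝ) (α : Fin k → Pt m k → ℝ) (x : Pt m k) : ℝ :=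
  L (Lpt α x)

/-- `ᾱ_ν(q,v,t) = ∑_r v_r ∂α_ν/∂v_r`. -/
def abar (α : Fin k → Pt m k → ℝ) (ν : Fin k) (x : Pt m k) : ℝ :=
  ∑ r : Fin m, x.2.1 r * pv (α ν) r x

/-- The restricted energy `E*(q,v,t) = ∑_r v_r ∂L*/∂v_r − L*`. -/
def Estar (L : PtL m k → ℝ) (α : Fin k → Pt m k → ℝ) (x : Pt m k) : ℝ :=
  ∑ r : Fin m, x.2.1 r * pv (Lstar L α) r x - Lstar L α x

/-- The energy `E(q,v,t) = ∑_i û_i (∂L/∂u_i)(q,û,t) − L*(q,v,t)`. -/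
def En (L : PtL m k → ℝ) (α : Fin k → Pt m k → ℝ) (x : Pt m k) : ℝ :=
  ∑ i : Fin (m+k), uhat α x i * pv L i (Lpt α x) - Lstar L α x

/-- `q̇_i(t)`. -/
def qdot {n : ℕ} (q : ℝ → Fin n → ℝ) (t : ℝ) (i : Fin n) : ℝ :=
  deriv (fun s => q s i) t

/-- The independent velocities `v(t) = (q̇₁,…,q̇ₘ)` along a curve. -/
def vel (m k : ℕ) (q : ℝ → Fin (m+k) → ℝ) (t : ℝ) (r : Fin m) : ℝ :=
  qdot q t (Fin.castAdd k r)

/-- The point `(q(t), v(t), t)` along a curve. -/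
def along (m k : ℕ) (q : ℝ → Fin (m+k) → ℝ) (t : ℝ) : Pt m k :=
  (q t, vel m k q t, t)

/-- The curve satisfies the nonholonomic constraints: `q̇_{m+ν} = α_ν(q, v, t)`. -/
def Constrained (α : Fin k → Pt m k → ℝ) (q : ℝ → Fin (m+k) → ℝ) : Prop :=
  ∀ (t : ℝ) (ν : Fin k), qdot q t (Fin.natAdd m ν) = α ν (along m k q t)

/-- The Voronec coefficients `B_rν(t)` along a constrained curve. -/
def Bco (α : Fin k → Pt m k → ℝ) (q : ℝ → Fin (m+k) → ℝ) (r : Fin m) (ν : Fin k) (t : ℝ) : ℝ :=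
  deriv (fun s => pv (α ν) r (along m k q s)) t
    - pq (α ν) (Fin.castAdd k r) (along m k q t)
    - ∑ μ : Fin k, pv (α μ) r (along m k q t) * pq (α ν) (Fin.natAdd m μ) (along m k q t)

/-- The Voronec equations of motion along a constrained curve. -/
def Voronec (L : PtL m k → ℝ) (α : Fin k → Pt m k → ℝ) (q : ℝ → Fin (m+k) → ℝ) : Prop :=
  ∀ (r : Fin m) (t : ℝ),
    deriv (fun s => pv (Lstar L α) r (along m k q s)) t
      - pq (Lstar L α) (Fin.castAdd k r) (along m k q t)
      - ∑ ν : Fin k, pq (Lstar L α) (Fin.natAdd m ν) (along m k q t) * pv (α ν) r (along m k q t)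
      - ∑ ν : Fin k, Bco α q r ν t * pv L (Fin.natAdd m ν) (Lpt α (along m k q t)) = 0

theorem fderiv_apply_eq_sum_partials {n m' : ℕ} (f : (Fin n → ℝ) × (Fin m' → ℝ) × ℝ → ℝ)
    (x : (Fin n → ℝ) × (Fin m' → ℝ) × ℝ) (a : Fin n → ℝ) (b : Fin m' → ℝ) (c : ℝ) :
    fderiv ℝ f x (a, b, c) = ∑ i, a i * pq f i x + ∑ j, b j * pv f j x + c * pt f x := by
  have hsplit : ((a, b, c) : (Fin n → ℝ) × (Fin m' → ℝ) × ℝ)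
      = ∑ i, a i • (Pi.single i 1, 0, 0) + ∑ j, b j • (0, Pi.single j 1, 0) + c • (0, 0, 1) := by
    ext <;> simp [Prod.fst_sum, Prod.snd_sum, Finset.sum_apply, Pi.single_apply]
  rw [hsplit]
  simp only [map_add, map_sum, map_smul, smul_eq_mul, pq, pv, pt]

theorem sum_append_mul {m k : ℕ} (a : Fin m → ℝ) (b : Fin k → ℝ) (g : Fin (m + k) → ℝ) :
    ∑ i, Fin.append a b i * g i
      = ∑ r, a r * g (Fin.castAdd k r) + ∑ ν, b ν * g (Fin.natAdd m ν) := by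
  simp [Fin.sum_univ_add]

theorem contDiff_pv {n m' : ℕ} {N : WithTop ℕ∞} {f : (Fin n → ℝ) × (Fin m' → ℝ) × ℝ → ℝ}
    (hf : ContDiff ℝ (N + 1) f) (j : Fin m') : ContDiff ℝ N (pv f j) :=
  (hf.fderiv_right le_rfl).clm_apply contDiff_const

@[simp] theorem uhat_castAdd (α : Fin k → Pt m k → ℝ) (x : Pt m k) (r : Fin m) :
    uhat α x (Fin.castAdd k r) = x.2.1 r := Fin.append_left _ _ _

@[simp] theorem uhat_natAdd (α : Fin k → Pt m k → ℝ) (x : Pt m k) (ν : Fin k) :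
    uhat α x (Fin.natAdd m ν) = α ν x := Fin.append_right _ _ _

theorem contDiff_uhat {N : WithTop ℕ∞} {α : Fin k → Pt m k → ℝ} (hα : ∀ ν, ContDiff ℝ N (α ν)) :
    ContDiff ℝ N (uhat α) := by
  refine contDiff_pi.2 fun i => ?_
  induction i using Fin.addCases with
  | left r => simp only [uhat_castAdd]; fun_prop
  | right ν => simpa using hα ν

section Differentiability

variable {α : Fin k → Pt m k → ℝ} {x : Pt m k}

theorem differentiableAt_uhat_apply (hα : ∀ ν, DifferentiableAt ℝ (α ν) x) (i : Fin (m + k)) :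
    DifferentiableAt ℝ (fun y => uhat α y i) x := by
  induction i using Fin.addCases with
  | left r => simp only [uhat_castAdd]; fun_prop
  | right ν => simpa using hα ν

theorem differentiableAt_uhat (hα : ∀ ν, DifferentiableAt ℝ (α ν) x) :
    DifferentiableAt ℝ (uhat α) x :=
  differentiableAt_pi.2 (differentiableAt_uhat_apply hα)

theorem fderiv_uhat_apply (hα : ∀ ν, DifferentiableAt ℝ (α ν) x) (w : Pt m k) :
    fderiv ℝ (uhat α) x w = Fin.append w.2.1 (fun ν => fderiv ℝ (α ν) x w) := by
  rw [show uhat α = fun y i => uhat α y i from rfl, fderiv_pi (differentiableAt_uhat_apply hα)]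
  funext i
  induction i using Fin.addCases with
  | left r =>
    have hv := (hasFDerivAt_apply (𝕜 := ℝ) r x.2.1).comp x (hasFDerivAt_fst.comp x hasFDerivAt_snd)
    simp only [ContinuousLinearMap.pi_apply, Fin.append_left, uhat_castAdd]
    rw [HasFDerivAt.fderiv (f := fun y : Pt m k => y.2.1 r) hv]
    rfl
  | right ν => simp

end Differentiability

section Restriction

variable {L : PtL m k → ℝ} {α : Fin k → Pt m k → ℝ} {x : Pt m k}

theorem fderiv_Lstar_apply (hL : DifferentiableAt ℝ L (Lpt α x))
    (hα : ∀ ν, DifferentiableAt ℝ (α ν) x) (w : Pt m k) :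
    fderiv ℝ (Lstar L α) x w
      = fderiv ℝ L (Lpt α x) (w.1, Fin.append w.2.1 (fun ν => fderiv ℝ (α ν) x w), w.2.2) := by
  have hLpt : HasFDerivAt (Lpt α) ((ContinuousLinearMap.fst ℝ _ _).prod ((fderiv ℝ (uhat α) x).prod
      ((ContinuousLinearMap.snd ℝ _ _).comp (ContinuousLinearMap.snd ℝ _ _)))) x :=
    hasFDerivAt_fst.prodMk ((differentiableAt_uhat hα).hasFDerivAt.prodMk
      (hasFDerivAt_snd.comp x hasFDerivAt_snd))
  rw [show Lstar L α = L ∘ Lpt α from rfl, (hL.hasFDerivAt.comp x hLpt).fderiv]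
  simp [fderiv_uhat_apply hα]

theorem pv_Lstar (hL : DifferentiableAt ℝ L (Lpt α x)) (hα : ∀ ν, DifferentiableAt ℝ (α ν) x)
    (r : Fin m) :
    pv (Lstar L α) r x = pv L (Fin.castAdd k r) (Lpt α x)
      + ∑ ν, pv (α ν) r x * pv L (Fin.natAdd m ν) (Lpt α x) := by
  rw [pv, fderiv_Lstar_apply hL hα, fderiv_apply_eq_sum_partials, sum_append_mul]
  simp [Pi.single_apply, pv]

theorem pt_Lstar (hL : DifferentiableAt ℝ L (Lpt α x)) (hα : ∀ ν, DifferentiableAt ℝ (α ν) x) :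
    pt (Lstar L α) x = pt L (Lpt α x) + ∑ ν, pt (α ν) x * pv L (Fin.natAdd m ν) (Lpt α x) := by
  rw [pt, fderiv_Lstar_apply hL hα, fderiv_apply_eq_sum_partials, sum_append_mul]
  simp [pt, add_comm]

theorem sum_mul_pv_Lstar (hL : DifferentiableAt ℝ L (Lpt α x))
    (hα : ∀ ν, DifferentiableAt ℝ (α ν) x) :
    ∑ r, x.2.1 r * pv (Lstar L α) r x
      = ∑ i, Fin.append x.2.1 (fun ν => abar α ν x) i * pv L i (Lpt α x) := by
  simp only [pv_Lstar hL hα, sum_append_mul, abar, mul_add, Finset.sum_add_distrib,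
    Finset.mul_sum, Finset.sum_mul]
  rw [Finset.sum_comm]
  simp only [mul_assoc]

theorem contDiff_Lstar (hL : ContDiff ℝ 2 L) (hα : ∀ ν, ContDiff ℝ 2 (α ν)) :
    ContDiff ℝ 2 (Lstar L α) :=
  hL.comp (contDiff_fst.prodMk ((contDiff_uhat hα).prodMk (contDiff_snd.comp contDiff_snd)))

end Restriction

def energy (f : Pt m k → ℝ) (x : Pt m k) : ℝ :=
  ∑ r, x.2.1 r * pv f r x - f x

section Curve

variable {q : ℝ → Fin (m + k) → ℝ}

theorem contDiff_vel (hq : ContDiff ℝ 2 q) : ContDiff ℝ 1 (vel m k q) :=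
  contDiff_pi.2 fun r => ((contDiff_pi.1 hq) (Fin.castAdd k r)).deriv'

theorem hasDerivAt_along (hq : ContDiff ℝ 2 q) (t : ℝ) :
    HasDerivAt (along m k q) (qdot q t, deriv (vel m k q) t, 1) t := by
  refine HasDerivAt.prodMk (hasDerivAt_pi.2 fun i => ?_) (HasDerivAt.prodMk ?_ (hasDerivAt_id t))
  · exact ((contDiff_pi.1 hq i).differentiable two_ne_zero t).hasDerivAt
  · exact ((contDiff_vel hq).differentiable one_ne_zero t).hasDerivAt

theorem hasDerivAt_comp_along (hq : ContDiff ℝ 2 q) {f : Pt m k → ℝ} {t : ℝ}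
    (hf : DifferentiableAt ℝ f (along m k q t)) :
    HasDerivAt (fun s => f (along m k q s))
      (∑ i, qdot q t i * pq f i (along m k q t)
        + ∑ r, deriv (vel m k q) t r * pv f r (along m k q t) + pt f (along m k q t)) t := by
  have h := hf.hasFDerivAt.comp_hasDerivAt t (hasDerivAt_along hq t)
  rwa [fderiv_apply_eq_sum_partials, one_mul] at h

theorem hasDerivAt_energy_along (hq : ContDiff ℝ 2 q)
    {f : Pt m k → ℝ} (hf : ContDiff ℝ 2 f) (t : ℝ) :
    HasDerivAt (fun s => energy f (along m k q s))
      (∑ r, vel m k q t r * deriv (fun s => pv f r (along m k q s)) t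
        - ∑ i, qdot q t i * pq f i (along m k q t) - pt f (along m k q t)) t := by
  have hvel : ∀ r, HasDerivAt (fun s => vel m k q s r) (deriv (vel m k q) t r) t :=
    hasDerivAt_pi.1 ((contDiff_vel hq).differentiable one_ne_zero t).hasDerivAt
  have hpv : ∀ r, HasDerivAt (fun s => pv f r (along m k q s))
      (deriv (fun s => pv f r (along m k q s)) t) t := fun r =>
    (((contDiff_pv hf r).differentiable one_ne_zero _).comp t
      (hasDerivAt_along hq t).differentiableAt).hasDerivAt
  have h := (HasDerivAt.fun_sum (u := Finset.univ) fun r _ => (hvel r).fun_mul (hpv r)).fun_sub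
    (hasDerivAt_comp_along hq ((hf.differentiable two_ne_zero) (along m k q t)))
  exact h.congr_deriv (by rw [Finset.sum_add_distrib]; ring)

end Curve

section Voronec

variable {L : PtL m k → ℝ} {α : Fin k → Pt m k → ℝ} {q : ℝ → Fin (m + k) → ℝ}

theorem Constrained.qdot_eq_append (hcon : Constrained α q) (t : ℝ) :
    qdot q t = Fin.append (vel m k q t) (fun ν => α ν (along m k q t)) := by
  funext i
  induction i using Fin.addCases with
  | left r => rw [Fin.append_left]; rfl
  | right ν => rw [Fin.append_right, hcon t ν]

theorem sum_vel_mul_sum_mul_pv (habar : ∀ ν x, abar α ν x = α ν x) (t : ℝ) (c : Fin k → ℝ) :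
    ∑ r, vel m k q t r * ∑ ν, c ν * pv (α ν) r (along m k q t)
      = ∑ ν, α ν (along m k q t) * c ν := by
  calc ∑ r, vel m k q t r * ∑ ν, c ν * pv (α ν) r (along m k q t)
      = ∑ ν, (∑ r, vel m k q t r * pv (α ν) r (along m k q t)) * c ν := by
        simp only [Finset.mul_sum, Finset.sum_mul]
        rw [Finset.sum_comm]
        exact Finset.sum_congr rfl fun ν _ => Finset.sum_congr rfl fun r _ => by ring
    _ = ∑ ν, α ν (along m k q t) * c ν :=
        Finset.sum_congr rfl fun ν _ => by rw [← habar ν]; rfl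

theorem energy_eq_zero_of_abar_eq {ν : Fin k} (habar : ∀ x, abar α ν x = α ν x) :
    energy (α ν) = 0 := by
  funext x
  rw [energy, ← habar x, abar, Pi.zero_apply, sub_self]

theorem sum_vel_mul_Bco (hα : ∀ ν, ContDiff ℝ 2 (α ν)) (habar : ∀ ν x, abar α ν x = α ν x)
    (hq : ContDiff ℝ 2 q) (hcon : Constrained α q) (ν : Fin k) (t : ℝ) :
    ∑ r, vel m k q t r * Bco α q r ν t = pt (α ν) (along m k q t) := by
  have hconst : HasDerivAt (fun s => energy (α ν) (along m k q s)) 0 t := by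
    simpa [energy_eq_zero_of_abar_eq (habar ν)] using hasDerivAt_const t (0 : ℝ)
  have h0 := (hasDerivAt_energy_along hq (hα ν) t).unique hconst
  have hswap := sum_vel_mul_sum_mul_pv (q := q) habar t
    (fun μ => pq (α ν) (Fin.natAdd m μ) (along m k q t))
  rw [hcon.qdot_eq_append, sum_append_mul] at h0
  simp only [Bco, mul_sub, Finset.sum_sub_distrib, mul_comm (pv (α _) _ _)]
  linarith

theorem hasDerivAt_Estar_along (hL : ContDiff ℝ 2 L) (hα : ∀ ν, ContDiff ℝ 2 (α ν))
    (habar : ∀ ν x, abar α ν x = α ν x) (hq : ContDiff ℝ 2 q) (hcon : Constrained α q)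
    (hvor : Voronec L α q) (t : ℝ) :
    HasDerivAt (fun s => Estar L α (along m k q s)) (- pt L (Lpt α (along m k q t))) t := by
  refine (hasDerivAt_energy_along hq (contDiff_Lstar hL hα) t).congr_deriv ?_
  have hP : ∀ r, deriv (fun s => pv (Lstar L α) r (along m k q s)) t
      = pq (Lstar L α) (Fin.castAdd k r) (along m k q t)
        + ∑ ν, pq (Lstar L α) (Fin.natAdd m ν) (along m k q t) * pv (α ν) r (along m k q t)
        + ∑ ν, Bco α q r ν t * pv L (Fin.natAdd m ν) (Lpt α (along m k q t)) := fun r => by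
    linarith [hvor r t]
  have hB :
      ∑ r, vel m k q t r * ∑ ν, Bco α q r ν t * pv L (Fin.natAdd m ν) (Lpt α (along m k q t))
      = ∑ ν, pt (α ν) (along m k q t) * pv L (Fin.natAdd m ν) (Lpt α (along m k q t)) := by
    simp only [← sum_vel_mul_Bco hα habar hq hcon, Finset.mul_sum, Finset.sum_mul]
    rw [Finset.sum_comm]
    exact Finset.sum_congr rfl fun ν _ => Finset.sum_congr rfl fun r _ => by ring
  simp only [hP, mul_add, Finset.sum_add_distrib, hB, sum_vel_mul_sum_mul_pv habar,
    hcon.qdot_eq_append, sum_append_mul,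
    pt_Lstar (hL.differentiable two_ne_zero _) fun ν => (hα ν).differentiable two_ne_zero _]
  ring

end Voronec

theorem homogeneous_energy_conservation_general (m k : ℕ)
    (L : PtL m k → ℝ) (hL : ContDiff ℝ 2 L)
    (α : Fin k → Pt m k → ℝ) (hα : ∀ ν, ContDiff ℝ 2 (α ν))
    (habar : ∀ (ν : Fin k) (x : Pt m k), abar α ν x = α ν x) :
    (∀ x : Pt m k,
      (∑ i : Fin (m+k), uhat α x i * pv L i (Lpt α x)
        = ∑ r : Fin m, x.2.1 r * pv (Lstar L α) r x)
      ∧ En L α x = Estar L α x)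
    ∧ (∀ (q : ℝ → Fin (m+k) → ℝ), ContDiff ℝ 2 q → Constrained α q → Voronec L α q →
        ∀ t : ℝ,
          deriv (fun s => Estar L α (along m k q s)) t = - pt L (Lpt α (along m k q t)))
    ∧ ((∀ x : PtL m k, pt L x = 0) →
        ∀ (q : ℝ → Fin (m+k) → ℝ), ContDiff ℝ 2 q → Constrained α q → Voronec L α q →
        ∀ t₁ t₂ : ℝ, Estar L α (along m k q t₁) = Estar L α (along m k q t₂)) := by
  have hsum : ∀ x : Pt m k,
      ∑ i, uhat α x i * pv L i (Lpt α x) = ∑ r, x.2.1 r * pv (Lstar L α) r x := fun x => by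
    rw [sum_mul_pv_Lstar (hL.differentiable two_ne_zero _)
      fun ν => (hα ν).differentiable two_ne_zero x]
    simp only [habar]
    rfl
  refine ⟨fun x => ⟨hsum x, by rw [En, Estar, hsum]⟩,
    fun q hq hcon hvor t => (hasDerivAt_Estar_along hL hα habar hq hcon hvor t).deriv,
    fun hstat q hq hcon hvor => ?_⟩
  have hE := hasDerivAt_Estar_along hL hα habar hq hcon hvor
  exact is_const_of_deriv_eq_zero (fun t => (hE t).differentiableAt)
    fun t => by rw [(hE t).deriv, hstat, neg_zero]

theorem homogeneous_energy_conservation (m k : ℕ) (hm : 0 < m) (hk : 0 < k)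
    (L : PtL m k → ℝ) (hL : ContDiff ℝ 2 L)
    (α : Fin k → Pt m k → ℝ) (hα : ∀ ν, ContDiff ℝ 2 (α ν))
    (habar : ∀ (ν : Fin k) (x : Pt m k), abar α ν x = α ν x) :
    (∀ x : Pt m k,
      (∑ i : Fin (m+k), uhat α x i * pv L i (Lpt α x)
        = ∑ r : Fin m, x.2.1 r * pv (Lstar L α) r x)
      ∧ En L α x = Estar L α x)
    ∧ (∀ (q : ℝ → Fin (m+k) → ℝ), ContDiff ℝ 2 q → Constrained α q → Voronec L α q →
        ∀ t : ℝ,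
          deriv (fun s => Estar L α (along m k q s)) t = - pt L (Lpt α (along m k q t)))
    ∧ ((∀ x : PtL m k, pt L x = 0) →
        ∀ (q : ℝ → Fin (m+k) → ℝ), ContDiff ℝ 2 q → Constrained α q → Voronec L α q →
        ∀ t₁ t₂ : ℝ, Estar L α (along m k q t₁) = Estar L α (along m k q t₂)) :=
  homogeneous_energy_conservation_general m k L hL α hα habar

end NH
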